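/- Let Φ be a unital completely positive map on M_N(ℂ) that is self-adjoint with respect to the KMS inner product, and let Φ(A) = Σ_{j=1}^M V_j* A V_j be a minimal Kraus representation with σ^{−1/2} V_j σ^{1/2} = V_j* for each j. Then Φ is an extreme point of the convex set of unital completely positive maps that are self-adjoint with respect to the KMS inner product if and only if the family { V_i* V_j + V_j* V_i : 1 ≤ i ≤ j ≤ M } is linearly independent over the real numbers. -/

import Mathlib

open MeasureTheory Matrix
open scoped ComplexOrder

noncomputable section

/-- The algebra of `N × N` complex matrices. -/
abbrev Mat (N : ℕ) := Matrix (Fin N) (Fin N) ℂ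

variable {N : ℕ}

/-- Real power `σ^s` of a positive definite matrix, defined via the spectral decomposition. -/
noncomputable def mpow (σ : Mat N) (hσ : σ.PosDef) (s : ℝ) : Mat N :=
  (hσ.1.eigenvectorUnitary : Mat N) *
    Matrix.diagonal (fun i => ((hσ.1.eigenvalues i ^ s : ℝ) : ℂ)) *
    star (hσ.1.eigenvectorUnitary : Mat N)

/-- Complete positivity of a linear map on `M_N(ℂ)`: existence of a Kraus representation. -/
def IsCP (Φ : Mat N →ₗ[ℂ] Mat N) : Prop :=
  ∃ (M : ℕ) (V : Fin M → Mat N), ∀ A, Φ A = ∑ j, (V j)ᴴ * A * V j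

/-- The KMS inner product `⟨B,A⟩_KMS = Tr[Bᴴ σ^{1/2} A σ^{1/2}]`. -/
def kmsInner (σ : Mat N) (hσ : σ.PosDef) (B A : Mat N) : ℂ :=
  (Bᴴ * mpow σ hσ (1/2) * A * mpow σ hσ (1/2)).trace

/-- Self-adjointness with respect to the KMS inner product. -/
def IsKMSSelfAdjoint (σ : Mat N) (hσ : σ.PosDef) (Φ : Mat N →ₗ[ℂ] Mat N) : Prop :=
  ∀ A B, kmsInner σ hσ B (Φ A) = kmsInner σ hσ (Φ B) A

/-!
Write `Ψ_T(A) = ∑ᵢⱼ Tᵢⱼ Vᵢᴴ A Vⱼ`, so that `Φ = Ψ_1`. Linear independence of the `Vⱼ` makes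
`T ↦ Ψ_T` injective, and the intertwining `σ^{1/2} Vⱼᴴ = Vⱼ σ^{1/2}` makes `Ψ_T` KMS self-adjoint
exactly when `T` has real entries; `Ψ_T` is CP when `T ≥ 0` and unital when
`∑ᵢⱼ (T - 1)ᵢⱼ Vᵢᴴ Vⱼ = 0`.

If `Φ = t Ψ₁ + (1 - t) Ψ₂` with `Ψ₁ = ∑ₖ Wₖᴴ · Wₖ`, then for every functional `f` vanishing on
`span {Vⱼ}` the nonnegative quantity `∑ₖ |f Wₖ|²` must vanish, so the `Wₖ` lie in that span and
`Ψ₁ = Ψ_T`; unitality and KMS self-adjointness turn `T - 1` into a real symmetric `D` with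
`∑ᵢⱼ Dᵢⱼ Vᵢᴴ Vⱼ = 0`. Conversely such a `D ≠ 0` splits `Φ = ½ Ψ_{1+εD} + ½ Ψ_{1-εD}` nontrivially.
Finally, real symmetric `D` with `∑ᵢⱼ Dᵢⱼ Vᵢᴴ Vⱼ = 0` are the same as real linear relations among
the `Vᵢᴴ Vⱼ + Vⱼᴴ Vᵢ`, `i ≤ j`.
-/

lemma mpow_mul_mpow (σ : Mat N) (hσ : σ.PosDef) (s t : ℝ) :
    mpow σ hσ s * mpow σ hσ t = mpow σ hσ (s + t) := by
  have hU : star (hσ.1.eigenvectorUnitary : Mat N) * hσ.1.eigenvectorUnitary = 1 :=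
    Unitary.star_mul_self_of_mem hσ.1.eigenvectorUnitary.2
  have hdiag : ∀ i, ((hσ.1.eigenvalues i ^ s : ℝ) : ℂ) * ((hσ.1.eigenvalues i ^ t : ℝ) : ℂ) =
      ((hσ.1.eigenvalues i ^ (s + t) : ℝ) : ℂ) := fun i => by
    rw [← Complex.ofReal_mul, Real.rpow_add (hσ.eigenvalues_pos i)]
  simp only [mpow, Matrix.mul_assoc]
  rw [← Matrix.mul_assoc (star _) _ (_ * _), hU, Matrix.one_mul, ← Matrix.mul_assoc (diagonal _),
    diagonal_mul_diagonal]
  simp only [hdiag]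

lemma mpow_zero (σ : Mat N) (hσ : σ.PosDef) : mpow σ hσ 0 = 1 := by
  simp [mpow, Real.rpow_zero, Unitary.mul_star_self_of_mem hσ.1.eigenvectorUnitary.2]

lemma mpow_mul_mpow_neg (σ : Mat N) (hσ : σ.PosDef) (s : ℝ) :
    mpow σ hσ s * mpow σ hσ (-s) = 1 := by
  rw [mpow_mul_mpow, add_neg_cancel, mpow_zero]

lemma mpow_neg_mul_mpow (σ : Mat N) (hσ : σ.PosDef) (s : ℝ) :
    mpow σ hσ (-s) * mpow σ hσ s = 1 := by
  rw [mpow_mul_mpow, neg_add_cancel, mpow_zero]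

lemma mpow_mul_conjTranspose_of_conj_eq {σ : Mat N} {hσ : σ.PosDef} {s : ℝ} {X : Mat N}
    (hX : mpow σ hσ (-s) * X * mpow σ hσ s = Xᴴ) : mpow σ hσ s * Xᴴ = X * mpow σ hσ s := by
  rw [← hX, ← Matrix.mul_assoc, ← Matrix.mul_assoc, mpow_mul_mpow_neg, Matrix.one_mul]

lemma conjTranspose_mul_single_mul_apply {l m n o R : Type*} [Fintype l] [Fintype m]
    [DecidableEq l] [DecidableEq m] [Semiring R] [StarRing R] (X : Matrix l n R)
    (Y : Matrix m o R) (a : l) (b : m) (p : n) (q : o) :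
    (Xᴴ * single a b (1 : R) * Y) p q = star (X a p) * Y b q := by
  simp [mul_apply, single_apply, ite_and]

lemma dual_apply_eq_sum {m n R : Type*} [Fintype m] [Fintype n] [DecidableEq m] [DecidableEq n]
    [CommSemiring R] (f : Module.Dual R (Matrix m n R)) (Y : Matrix m n R) :
    f Y = ∑ a, ∑ b, Y a b * f (single a b 1) := by
  have hsingle : ∀ a b, single a b (Y a b) = Y a b • single a b 1 := fun a b => by
    rw [smul_single, smul_eq_mul, mul_one]
  conv_lhs => rw [matrix_eq_sum_single Y]
  simp only [map_sum, hsingle, map_smul, smul_eq_mul]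

lemma map_re_map_ofReal_of_conjTranspose_eq_transpose {n : Type*} {R : Matrix n n ℂ}
    (hR : Rᴴ = Rᵀ) : (R.map Complex.re).map (↑) = R := by
  ext i j
  have hij := congr_fun (congr_fun hR j) i
  simp only [conjTranspose_apply, transpose_apply, RCLike.star_def] at hij
  exact Complex.conj_eq_iff_re.mp hij

open scoped MatrixOrder Matrix.Norms.L2Operator in
lemma exists_pos_posSemidef_one_add_smul_and_one_sub_smul {n : Type*} [Fintype n] [DecidableEq n]
    {H : Matrix n n ℂ} (hH : H.IsHermitian) :
    ∃ ε : ℝ, 0 < ε ∧ (1 + (ε : ℂ) • H).PosSemidef ∧ (1 - (ε : ℂ) • H).PosSemidef := by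
  set r := ‖H‖
  have hadd : (algebraMap ℝ (Matrix n n ℂ) r + H).PosSemidef :=
    (neg_le_iff_add_nonneg'.mp (IsSelfAdjoint.neg_algebraMap_norm_le_self hH)).posSemidef
  have hsub : (algebraMap ℝ (Matrix n n ℂ) r - H).PosSemidef :=
    (sub_nonneg.mpr (IsSelfAdjoint.le_algebraMap_norm_self hH)).posSemidef
  set ε := (r + 1)⁻¹
  have hε : 0 < ε := by positivity
  have hεr : 0 ≤ 1 - ε * r := by
    rw [sub_nonneg, ← div_eq_inv_mul, div_le_one (by positivity)]
    linarith
  refine ⟨ε, hε, ?_, ?_⟩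
  · convert (hadd.smul hε.le).add (PosSemidef.one.smul hεr) using 1
    rw [Algebra.algebraMap_eq_smul_one]
    module
  · convert (hsub.smul hε.le).add (PosSemidef.one.smul hεr) using 1
    rw [Algebra.algebraMap_eq_smul_one]
    module

section SymmetricPairs

variable {ι K E : Type*} [LinearOrder ι] [Field K]

def symmOfPairs (g : {p : ι × ι // p.1 ≤ p.2} → K) : Matrix ι ι K :=
  of fun i j => (if h : i ≤ j then g ⟨(i, j), h⟩ else 0) + (if h : j ≤ i then g ⟨(j, i), h⟩ else 0)

lemma symmOfPairs_isSymm (g : {p : ι × ι // p.1 ≤ p.2} → K) : (symmOfPairs g).IsSymm := by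
  ext i j
  simp [symmOfPairs, add_comm]

variable [Fintype ι] [AddCommGroup E] [Module K E]

lemma sum_sum_dite_le (F : {p : ι × ι // p.1 ≤ p.2} → E) :
    ∑ i, ∑ j, (if h : i ≤ j then F ⟨(i, j), h⟩ else 0) = ∑ p, F p := by
  rw [← Fintype.sum_prod_type' (f := fun i j => if h : i ≤ j then F ⟨(i, j), h⟩ else 0),
    Finset.sum_dite, Finset.sum_const_zero, add_zero]
  exact Fintype.sum_equiv (Equiv.subtypeEquivRight (by simp)) _ _ fun _ => rfl

lemma sum_pairs_smul_eq (g : {p : ι × ι // p.1 ≤ p.2} → K) (X : ι → ι → E) :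
    ∑ p, g p • (X p.1.1 p.1.2 + X p.1.2 p.1.1) = ∑ i, ∑ j, symmOfPairs g i j • X i j := by
  simp only [symmOfPairs, of_apply, add_smul, dite_smul, zero_smul, Finset.sum_add_distrib,
    smul_add]
  rw [Finset.sum_comm (f := fun i j => if h : j ≤ i then g ⟨(j, i), h⟩ • X i j else 0),
    sum_sum_dite_le (fun p => g p • X p.1.1 p.1.2), sum_sum_dite_le (fun p => g p • X p.1.2 p.1.1)]

lemma linearIndependent_pairs_iff [CharZero K] (X : ι → ι → E) :
    LinearIndependent K (fun p : {p : ι × ι // p.1 ≤ p.2} => X p.1.1 p.1.2 + X p.1.2 p.1.1) ↔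
      ∀ D : Matrix ι ι K, D.IsSymm → ∑ i, ∑ j, D i j • X i j = 0 → D = 0 := by
  rw [Fintype.linearIndependent_iff]
  constructor
  · intro hli D hD hsum
    set g : {p : ι × ι // p.1 ≤ p.2} → K := fun p =>
      if p.1.1 = p.1.2 then D p.1.1 p.1.2 / 2 else D p.1.1 p.1.2
    have hDg : symmOfPairs g = D := by
      ext i j
      rcases lt_trichotomy i j with hij | rfl | hij
      · simp [symmOfPairs, g, hij.le, hij.not_ge, hij.ne]
      · simp [symmOfPairs, g]
      · simp [symmOfPairs, g, hij.le, hij.not_ge, hij.ne, hD.apply i j]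
    have hg := hli g (by rw [sum_pairs_smul_eq, hDg, hsum])
    rw [← hDg]
    ext i j
    simp [symmOfPairs, hg]
  · rintro h g hg ⟨⟨i, j⟩, hij : i ≤ j⟩
    have h0 := congr_fun (congr_fun (h _ (symmOfPairs_isSymm g) (by rw [← sum_pairs_smul_eq, hg]))
      i) j
    rcases hij.lt_or_eq with hlt | rfl
    · simpa [symmOfPairs, hij, hlt.not_ge] using h0
    · simpa [symmOfPairs] using h0

end SymmetricPairs

variable {M : ℕ}

def krausMap (V : Fin M → Mat N) : Matrix (Fin M) (Fin M) ℂ →ₗ[ℂ] Mat N →ₗ[ℂ] Mat N :=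
  LinearMap.mk₂ ℂ (fun T A => ∑ i, ∑ j, T i j • ((V i)ᴴ * A * V j))
    (fun T T' A => by simp only [Matrix.add_apply, add_smul, Finset.sum_add_distrib])
    (fun c T A => by simp only [Matrix.smul_apply, smul_eq_mul, mul_smul, Finset.smul_sum])
    (fun T A B => by simp only [Matrix.mul_add, Matrix.add_mul, smul_add, Finset.sum_add_distrib])
    (fun c T A => by simp only [Matrix.mul_smul, Matrix.smul_mul, smul_comm c, Finset.smul_sum])

lemma krausMap_apply (V : Fin M → Mat N) (T : Matrix (Fin M) (Fin M) ℂ) (A : Mat N) :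
    krausMap V T A = ∑ i, ∑ j, T i j • ((V i)ᴴ * A * V j) := rfl

lemma krausMap_one_apply (V : Fin M → Mat N) (A : Mat N) :
    krausMap V 1 A = ∑ j, (V j)ᴴ * A * V j := by
  simp [krausMap_apply, one_apply, ite_smul]

lemma krausMap_map_ofReal_apply_one (V : Fin M → Mat N) (D : Matrix (Fin M) (Fin M) ℝ) :
    krausMap V (D.map (↑)) 1 = ∑ i, ∑ j, D i j • ((V i)ᴴ * V j) := by
  simp [krausMap_apply, Complex.coe_smul]

lemma krausMap_conjTranspose_mul_self {K : ℕ} (V : Fin M → Mat N)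
    (S : Matrix (Fin K) (Fin M) ℂ) (A : Mat N) :
    krausMap V (Sᴴ * S) A = ∑ k, (∑ j, S k j • V j)ᴴ * A * ∑ j, S k j • V j := by
  simp only [krausMap_apply, mul_apply, conjTranspose_apply, Finset.sum_smul, conjTranspose_sum,
    conjTranspose_smul, Matrix.sum_mul, Matrix.mul_sum, Matrix.smul_mul, Matrix.mul_smul,
    smul_smul, Finset.smul_sum]
  simp only [Finset.sum_comm (γ := Fin K), mul_comm (S _ _)]
  exact Finset.sum_comm

open scoped MatrixOrder Matrix.Norms.L2Operator in
lemma isCP_krausMap (V : Fin M → Mat N) {T : Matrix (Fin M) (Fin M) ℂ} (hT : T.PosSemidef) :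
    IsCP (krausMap V T) := by
  obtain ⟨S, rfl⟩ := CStarAlgebra.nonneg_iff_eq_star_mul_self.mp hT.nonneg
  exact ⟨M, fun k => ∑ j, S k j • V j, krausMap_conjTranspose_mul_self V S⟩

lemma krausMap_injective {V : Fin M → Mat N} (hV : LinearIndependent ℂ V) :
    Function.Injective (krausMap V) := by
  rw [← LinearMap.ker_eq_bot, LinearMap.ker_eq_bot']
  intro T hT
  have hcol : ∀ a p j, ∑ i, T i j * star (V i a p) = 0 := by
    intro a p
    refine Fintype.linearIndependent_iff.mp hV _ ?_
    ext b q
    have h := congr_fun (congr_fun (LinearMap.congr_fun hT (single a b 1)) p) q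
    simp only [krausMap_apply, Matrix.sum_apply, Matrix.smul_apply,
      conjTranspose_mul_single_mul_apply, smul_eq_mul, LinearMap.zero_apply, Matrix.zero_apply] at h
    rw [Finset.sum_comm] at h
    simpa [Matrix.sum_apply, Finset.sum_mul, mul_assoc] using h
  ext i j
  have hrow := Fintype.linearIndependent_iff.mp hV (fun i => star (T i j)) <| by
    ext a p
    simpa [Matrix.sum_apply, mul_comm] using congr_arg star (hcol a p j)
  simpa using hrow i

lemma conjTranspose_krausMap_apply (V : Fin M → Mat N) (T : Matrix (Fin M) (Fin M) ℂ)
    (B : Mat N) : (krausMap V T B)ᴴ = krausMap V Tᴴ Bᴴ := by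
  simp only [krausMap_apply, conjTranspose_sum, conjTranspose_smul, conjTranspose_mul,
    conjTranspose_conjTranspose, conjTranspose_apply, Matrix.mul_assoc]
  exact Finset.sum_comm

lemma trace_mul_krausMap_mul {V : Fin M → Mat N} {P : Mat N} (hP : ∀ j, P * (V j)ᴴ = V j * P)
    (T : Matrix (Fin M) (Fin M) ℂ) (A C : Mat N) :
    (C * P * krausMap V T A * P).trace = (krausMap V Tᵀ C * P * A * P).trace := by
  have hterm : ∀ i j, (C * P * ((V i)ᴴ * A * V j) * P).trace =
      ((V j)ᴴ * C * V i * P * A * P).trace := fun i j => by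
    calc _ = (C * (P * (V i)ᴴ) * A * (V j * P)).trace := by simp only [Matrix.mul_assoc]
      _ = ((C * V i * P * A * P) * (V j)ᴴ).trace := by
        rw [hP i, ← hP j]; simp only [Matrix.mul_assoc]
      _ = _ := by rw [trace_mul_comm]; simp only [Matrix.mul_assoc]
  simp only [krausMap_apply, Matrix.sum_mul, Matrix.mul_sum, Matrix.smul_mul, Matrix.mul_smul,
    trace_sum, trace_smul, transpose_apply, hterm]
  exact Finset.sum_comm

lemma isKMSSelfAdjoint_krausMap_iff {σ : Mat N} {hσ : σ.PosDef} {V : Fin M → Mat N}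
    (hmin : LinearIndependent ℂ V)
    (hV : ∀ j, mpow σ hσ (-(1/2)) * V j * mpow σ hσ (1/2) = (V j)ᴴ)
    (T : Matrix (Fin M) (Fin M) ℂ) :
    IsKMSSelfAdjoint σ hσ (krausMap V T) ↔ Tᴴ = Tᵀ := by
  simp only [IsKMSSelfAdjoint, kmsInner]
  set P := mpow σ hσ (1/2)
  set Q := mpow σ hσ (-(1/2))
  have hP : ∀ j, P * (V j)ᴴ = V j * P := fun j => mpow_mul_conjTranspose_of_conj_eq (hV j)
  have hPQ : ∀ X Y : Mat N, X * P * (Q * Y * Q) * P = X * Y := fun X Y => by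
    simp only [P, Q, Matrix.mul_assoc, mpow_neg_mul_mpow, Matrix.mul_one]
    rw [← Matrix.mul_assoc P, mpow_mul_mpow_neg, Matrix.one_mul]
  simp only [trace_mul_krausMap_mul hP, conjTranspose_krausMap_apply]
  refine ⟨fun h => krausMap_injective hmin ?_, fun h A B => by rw [h]⟩
  ext1 C
  rw [ext_iff_trace_mul_right]
  intro Y
  simpa only [hPQ, conjTranspose_conjTranspose] using (h (Q * Y * Q) Cᴴ).symm

def krausForm (f : Module.Dual ℂ (Mat N)) : (Mat N →ₗ[ℂ] Mat N) →ₗ[ℂ] ℂ where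
  toFun Ψ := ∑ a, ∑ b, ∑ c, ∑ d, Ψ (single a c 1) b d * star (f (single a b 1)) * f (single c d 1)
  map_add' Ψ Ψ' := by
    simp only [LinearMap.add_apply, Matrix.add_apply, add_mul, Finset.sum_add_distrib]
  map_smul' c Ψ := by
    simp only [LinearMap.smul_apply, Matrix.smul_apply, smul_eq_mul, Finset.mul_sum,
      RingHom.id_apply, mul_assoc]

lemma krausForm_eq_sum_norm_sq (f : Module.Dual ℂ (Mat N)) {Ψ : Mat N →ₗ[ℂ] Mat N} {K : ℕ}
    {W : Fin K → Mat N} (hW : ∀ A, Ψ A = ∑ k, (W k)ᴴ * A * W k) :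
    krausForm f Ψ = ((∑ k, ‖f (W k)‖ ^ 2 : ℝ) : ℂ) := by
  have hΨ : Ψ = ∑ k, LinearMap.mulLeft ℂ (W k)ᴴ ∘ₗ LinearMap.mulRight ℂ (W k) := by
    ext1 A
    simp [hW, Matrix.mul_assoc]
  rw [hΨ, map_sum, Complex.ofReal_sum]
  refine Finset.sum_congr rfl fun k _ => ?_
  rw [Complex.ofReal_pow, ← Complex.conj_mul']
  simp only [krausForm, LinearMap.coe_mk, AddHom.coe_mk, LinearMap.comp_apply,
    LinearMap.mulLeft_apply, LinearMap.mulRight_apply, ← Matrix.mul_assoc,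
    conjTranspose_mul_single_mul_apply]
  rw [dual_apply_eq_sum f (W k)]
  simp only [map_sum, map_mul, Finset.sum_mul]
  simp only [Finset.mul_sum]
  refine Finset.sum_congr rfl fun a _ => Finset.sum_congr rfl fun b _ =>
    Finset.sum_congr rfl fun c _ => Finset.sum_congr rfl fun d _ => ?_
  simp only [RCLike.star_def]
  ring

lemma mem_span_of_eq_smul_add_smul {V : Fin M → Mat N} {Φ Ψ₁ Ψ₂ : Mat N →ₗ[ℂ] Mat N} {K : ℕ}
    {W : Fin K → Mat N} (hΦ : ∀ A, Φ A = ∑ j, (V j)ᴴ * A * V j)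
    (hW : ∀ A, Ψ₁ A = ∑ k, (W k)ᴴ * A * W k) (hΨ₂ : IsCP Ψ₂) {t : ℝ} (ht0 : 0 < t) (ht1 : t < 1)
    (h : Φ = (t : ℂ) • Ψ₁ + ((1 - t : ℝ) : ℂ) • Ψ₂) (k : Fin K) :
    W k ∈ Submodule.span ℂ (Set.range V) := by
  by_contra hk
  obtain ⟨f, hfk, hf_span⟩ := Submodule.exists_dual_map_eq_bot_of_notMem hk inferInstance
  have hfV : ∀ j, f (V j) = 0 := fun j => by
    have hj : f (V j) ∈ (Submodule.span ℂ (Set.range V)).map f :=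
      Submodule.mem_map_of_mem (Submodule.subset_span (Set.mem_range_self j))
    rwa [hf_span, Submodule.mem_bot] at hj
  obtain ⟨L, U, hU⟩ := hΨ₂
  have hform := congr_arg (krausForm f) h
  simp only [map_add, map_smul, smul_eq_mul, krausForm_eq_sum_norm_sq f hΦ,
    krausForm_eq_sum_norm_sq f hW, krausForm_eq_sum_norm_sq f hU, hfV, norm_zero,
    zero_pow two_ne_zero, Finset.sum_const_zero] at hform
  have hreal : 0 = t * ∑ k, ‖f (W k)‖ ^ 2 + (1 - t) * ∑ l, ‖f (U l)‖ ^ 2 := by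
    exact_mod_cast hform
  have hWnonneg : 0 ≤ ∑ k, ‖f (W k)‖ ^ 2 := Finset.sum_nonneg fun _ _ => by positivity
  have hUnonneg : 0 ≤ ∑ l, ‖f (U l)‖ ^ 2 := Finset.sum_nonneg fun _ _ => by positivity
  have hWzero : ∑ k, ‖f (W k)‖ ^ 2 = 0 := by nlinarith
  rw [Finset.sum_eq_zero_iff_of_nonneg fun _ _ => by positivity] at hWzero
  exact hfk (by simpa using hWzero k (Finset.mem_univ k))

lemma exists_posSemidef_krausMap_eq {V : Fin M → Mat N} {Φ Ψ₁ Ψ₂ : Mat N →ₗ[ℂ] Mat N}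
    (hΦ : ∀ A, Φ A = ∑ j, (V j)ᴴ * A * V j) (hΨ₁ : IsCP Ψ₁) (hΨ₂ : IsCP Ψ₂) {t : ℝ}
    (ht0 : 0 < t) (ht1 : t < 1) (h : Φ = (t : ℂ) • Ψ₁ + ((1 - t : ℝ) : ℂ) • Ψ₂) :
    ∃ T : Matrix (Fin M) (Fin M) ℂ, T.PosSemidef ∧ Ψ₁ = krausMap V T := by
  obtain ⟨K, W, hW⟩ := hΨ₁
  choose S hS using fun k => (Submodule.mem_span_range_iff_exists_fun ℂ).mp
    (mem_span_of_eq_smul_add_smul hΦ hW hΨ₂ ht0 ht1 h k)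
  refine ⟨(of S)ᴴ * of S, posSemidef_conjTranspose_mul_self _, LinearMap.ext fun A => ?_⟩
  simp [hW, krausMap_conjTranspose_mul_self, hS]

lemma eq_of_eq_smul_add_smul {σ : Mat N} {hσ : σ.PosDef} {Φ Ψ₁ Ψ₂ : Mat N →ₗ[ℂ] Mat N}
    (hΦu : Φ 1 = 1) {V : Fin M → Mat N} (hmin : LinearIndependent ℂ V)
    (hV : ∀ j, mpow σ hσ (-(1/2)) * V j * mpow σ hσ (1/2) = (V j)ᴴ)
    (hrep : ∀ A, Φ A = ∑ j, (V j)ᴴ * A * V j)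
    (hsymm : ∀ D : Matrix (Fin M) (Fin M) ℝ, D.IsSymm →
      ∑ i, ∑ j, D i j • ((V i)ᴴ * V j) = 0 → D = 0)
    (hcp₁ : IsCP Ψ₁) (hsa₁ : IsKMSSelfAdjoint σ hσ Ψ₁) (hu₁ : Ψ₁ 1 = 1) (hcp₂ : IsCP Ψ₂)
    {t : ℝ} (ht0 : 0 < t) (ht1 : t < 1) (h : Φ = (t : ℂ) • Ψ₁ + ((1 - t : ℝ) : ℂ) • Ψ₂) :
    Ψ₁ = Φ := by
  have hΦ : Φ = krausMap V 1 := LinearMap.ext fun A => by rw [hrep, krausMap_one_apply]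
  obtain ⟨T, hT, rfl⟩ := exists_posSemidef_krausMap_eq hrep hcp₁ hcp₂ ht0 ht1 h
  have hTreal : Tᴴ = Tᵀ := (isKMSSelfAdjoint_krausMap_iff hmin hV T).mp hsa₁
  have hR : (T - 1)ᴴ = (T - 1)ᵀ := by simp [conjTranspose_sub, transpose_sub, hTreal]
  have hRsymm : ((T - 1).map Complex.re).IsSymm := by
    rw [IsSymm, ← transpose_map, ← hR, conjTranspose_sub, hT.1.eq, conjTranspose_one]
  have hR0 := hsymm _ hRsymm <| by
    rw [← krausMap_map_ofReal_apply_one, map_re_map_ofReal_of_conjTranspose_eq_transpose hR,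
      map_sub, LinearMap.sub_apply, hu₁, ← hΦ, hΦu, sub_self]
  rw [hΦ, ← sub_eq_zero, ← map_sub, ← map_re_map_ofReal_of_conjTranspose_eq_transpose hR, hR0]
  simp

lemma eq_zero_of_isSymm_of_extreme {σ : Mat N} {hσ : σ.PosDef} {Φ : Mat N →ₗ[ℂ] Mat N}
    (hΦu : Φ 1 = 1) {V : Fin M → Mat N} (hmin : LinearIndependent ℂ V)
    (hV : ∀ j, mpow σ hσ (-(1/2)) * V j * mpow σ hσ (1/2) = (V j)ᴴ)
    (hrep : ∀ A, Φ A = ∑ j, (V j)ᴴ * A * V j)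
    (hext : ∀ Ψ₁ Ψ₂ : Mat N →ₗ[ℂ] Mat N,
        IsCP Ψ₁ → IsKMSSelfAdjoint σ hσ Ψ₁ → Ψ₁ 1 = 1 →
        IsCP Ψ₂ → IsKMSSelfAdjoint σ hσ Ψ₂ → Ψ₂ 1 = 1 →
        ∀ t : ℝ, 0 < t → t < 1 →
          Φ = (t : ℂ) • Ψ₁ + ((1 - t : ℝ) : ℂ) • Ψ₂ → Ψ₁ = Φ ∧ Ψ₂ = Φ)
    {D : Matrix (Fin M) (Fin M) ℝ} (hD : D.IsSymm) (hsum : ∑ i, ∑ j, D i j • ((V i)ᴴ * V j) = 0) :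
    D = 0 := by
  set H : Matrix (Fin M) (Fin M) ℂ := D.map (↑)
  have hHt : Hᵀ = H := by rw [← transpose_map, hD]
  have hHh : Hᴴ = H := by
    ext i j
    simp [H, hD.apply i j]
  obtain ⟨ε, hε, hplus, hminus⟩ := exists_pos_posSemidef_one_add_smul_and_one_sub_smul hHh
  rw [sub_eq_add_neg, ← neg_smul, ← Complex.ofReal_neg] at hminus
  have hΦ : Φ = krausMap V 1 := LinearMap.ext fun A => by rw [hrep, krausMap_one_apply]
  have hH1 : krausMap V H 1 = 0 := (krausMap_map_ofReal_apply_one V D).trans hsum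
  have hunital : ∀ s : ℝ, krausMap V (1 + (s : ℂ) • H) 1 = 1 := fun s => by
    rw [map_add, map_smul, LinearMap.add_apply, LinearMap.smul_apply, hH1, smul_zero, add_zero,
      ← hΦ, hΦu]
  have hsa : ∀ s : ℝ, IsKMSSelfAdjoint σ hσ (krausMap V (1 + (s : ℂ) • H)) := fun s =>
    (isKMSSelfAdjoint_krausMap_iff hmin hV _).mpr <| by
      simp [conjTranspose_add, transpose_add, conjTranspose_smul, hHt, hHh]
  have hconv : Φ = ((1 / 2 : ℝ) : ℂ) • krausMap V (1 + (ε : ℂ) • H) +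
      ((1 - 1 / 2 : ℝ) : ℂ) • krausMap V (1 + ((-ε : ℝ) : ℂ) • H) := by
    rw [hΦ, ← map_smul, ← map_smul, ← map_add]
    congr 1
    push_cast
    module
  obtain ⟨hplus_eq, -⟩ := hext _ _ (isCP_krausMap V hplus) (hsa ε) (hunital ε)
    (isCP_krausMap V hminus) (hsa (-ε)) (hunital (-ε)) (1 / 2) (by norm_num) (by norm_num) hconv
  rw [hΦ] at hplus_eq
  have hεH : (ε : ℂ) • H = 0 := by simpa using krausMap_injective hmin hplus_eq
  ext i j
  simpa [H, hε.ne'] using congr_fun (congr_fun hεH i) j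

theorem kms_unital_extreme_iff_general (N : ℕ) (σ : Mat N) (hσ : σ.PosDef)
    (Φ : Mat N →ₗ[ℂ] Mat N) (hΦu : Φ 1 = 1)
    (M : ℕ) (V : Fin M → Mat N) (hmin : LinearIndependent ℂ V)
    (hV : ∀ j, mpow σ hσ (-(1/2)) * V j * mpow σ hσ (1/2) = (V j)ᴴ)
    (hrep : ∀ A, Φ A = ∑ j, (V j)ᴴ * A * V j) :
    (∀ Ψ₁ Ψ₂ : Mat N →ₗ[ℂ] Mat N,
        IsCP Ψ₁ → IsKMSSelfAdjoint σ hσ Ψ₁ → Ψ₁ 1 = 1 →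
        IsCP Ψ₂ → IsKMSSelfAdjoint σ hσ Ψ₂ → Ψ₂ 1 = 1 →
        ∀ t : ℝ, 0 < t → t < 1 →
          Φ = (t : ℂ) • Ψ₁ + ((1 - t : ℝ) : ℂ) • Ψ₂ → Ψ₁ = Φ ∧ Ψ₂ = Φ) ↔
      LinearIndependent ℝ
        (fun p : {p : Fin M × Fin M // p.1 ≤ p.2} =>
          (V p.1.1)ᴴ * V p.1.2 + (V p.1.2)ᴴ * V p.1.1) := by
  rw [linearIndependent_pairs_iff fun i j => (V i)ᴴ * V j]
  refine ⟨fun hext D hD hsum => eq_zero_of_isSymm_of_extreme hΦu hmin hV hrep hext hD hsum, ?_⟩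
  intro hsymm Ψ₁ Ψ₂ hcp₁ hsa₁ hu₁ hcp₂ hsa₂ hu₂ t ht0 ht1 h
  have h' : Φ = ((1 - t : ℝ) : ℂ) • Ψ₂ + ((1 - (1 - t) : ℝ) : ℂ) • Ψ₁ := by
    rw [h, sub_sub_cancel, add_comm]
  exact ⟨eq_of_eq_smul_add_smul hΦu hmin hV hrep hsymm hcp₁ hsa₁ hu₁ hcp₂ ht0 ht1 h,
    eq_of_eq_smul_add_smul hΦu hmin hV hrep hsymm hcp₂ hsa₂ hu₂ hcp₁ (by linarith) (by linarith) h'⟩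

/-- A unital CP map `Φ` that is KMS self-adjoint, with minimal Kraus
representation `Φ(A) = Σ_j Vⱼᴴ A Vⱼ`, `σ^{-1/2} Vⱼ σ^{1/2} = Vⱼᴴ`, is an extreme point of
the convex set of unital KMS self-adjoint CP maps iff the family
`{Vᵢᴴ Vⱼ + Vⱼᴴ Vᵢ : i ≤ j}` is linearly independent over `ℝ`. -/
theorem kms_unital_extreme_iff (N : ℕ) (hN : 2 ≤ N) (σ : Mat N) (hσ : σ.PosDef)
    (htr : σ.trace = 1) (Φ : Mat N →ₗ[ℂ] Mat N)
    (hΦcp : IsCP Φ) (hΦsa : IsKMSSelfAdjoint σ hσ Φ) (hΦu : Φ 1 = 1)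
    (M : ℕ) (V : Fin M → Mat N) (hmin : LinearIndependent ℂ V)
    (hV : ∀ j, mpow σ hσ (-(1/2)) * V j * mpow σ hσ (1/2) = (V j)ᴴ)
    (hrep : ∀ A, Φ A = ∑ j, (V j)ᴴ * A * V j) :
    (∀ Ψ₁ Ψ₂ : Mat N →ₗ[ℂ] Mat N,
        IsCP Ψ₁ → IsKMSSelfAdjoint σ hσ Ψ₁ → Ψ₁ 1 = 1 →
        IsCP Ψ₂ → IsKMSSelfAdjoint σ hσ Ψ₂ → Ψ₂ 1 = 1 →
        ∀ t : ℝ, 0 < t → t < 1 →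
          Φ = (t : ℂ) • Ψ₁ + ((1 - t : ℝ) : ℂ) • Ψ₂ → Ψ₁ = Φ ∧ Ψ₂ = Φ) ↔
      LinearIndependent ℝ
        (fun p : {p : Fin M × Fin M // p.1 ≤ p.2} =>
          (V p.1.1)ᴴ * V p.1.2 + (V p.1.2)ᴴ * V p.1.1) :=
  kms_unital_extreme_iff_general N σ hσ Φ hΦu M V hmin hV hrep
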